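/- Let X and Y be complex Banach spaces, A ∈ B(X), B ∈ B(Y), C ∈ B(Y, X), and let M_C ∈ B(X ⊕ Y) be the upper-triangular operator matrix M_C(x, y) = (Ax + Cy, By). Then σ_l(M_C) ∪ S(A*) = σ_l(A) ∪ σ_l(B) ∪ S(A*), where σ_l denotes the left spectrum, A* the Banach-space adjoint of A, and S(A*) the set of points where A* fails to have the single valued extension property. -/

import Mathlib

/-!
Left inverses of `A - z` and `B - z` assemble into one of `M_C - z`, and compressing a left
inverse of `M_C - z` to the first coordinate gives one of `A - z`. Conversely, if `M_C - z` is left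
invertible then `A - z` has closed range and `(A - z)*` is onto; if `A*` has the SVEP at `z`,
Finch's argument makes `(A - z)*` injective, so by Hahn–Banach `A - z` is onto. Choosing `x` with
`(A - z) x = -C y` gives `(M_C - z)(x, y) = (0, (B - z) y)`, so the second coordinate of the left
inverse of `M_C - z` on `0 ⊕ Y` is a left inverse of `B - z`.
-/

set_option linter.unusedSectionVars false

noncomputable section

open ContinuousLinearMap Metric Set

variable {E : Type*} [NormedAddCommGroup E] [NormedSpace ℂ E]
variable {X Y : Type*} [NormedAddCommGroup X] [NormedSpace ℂ X] [CompleteSpace X]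
  [NormedAddCommGroup Y] [NormedSpace ℂ Y] [CompleteSpace Y]

/-- The left spectrum: points where `T - z` has no left inverse in `B(E)`. -/
def leftSpectrum (T : E →L[ℂ] E) : Set ℂ :=
  {z | ¬ ∃ S : E →L[ℂ] E, S * (T - z • 1) = 1}

/-- `T` has the single valued extension property at `z₀`. -/
def HasSVEPAt (T : E →L[ℂ] E) (z₀ : ℂ) : Prop :=
  ∃ r > (0 : ℝ), ∀ V : Set ℂ, V ⊆ ball z₀ r → IsOpen V →
    ∀ f : ℂ → E, AnalyticOnNhd ℂ f V → (∀ z ∈ V, (T - z • 1) (f z) = 0) →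
      ∀ z ∈ V, f z = 0

/-- `S(T)`: the set of points where `T` fails to have the SVEP. -/
def svepFail (T : E →L[ℂ] E) : Set ℂ :=
  {z | ¬ HasSVEPAt T z}

/-- The Banach-space adjoint (dual map) of `T`, acting on the continuous dual. -/
def dualOp (T : E →L[ℂ] E) : (E →L[ℂ] ℂ) →L[ℂ] (E →L[ℂ] ℂ) :=
  (ContinuousLinearMap.compL ℂ E E ℂ).flip T

/-- The upper-triangular operator matrix `M_C (x, y) = (A x + C y, B y)` on `X ⊕ Y`. -/
def ucMat (A : X →L[ℂ] X) (B : Y →L[ℂ] Y) (C : Y →L[ℂ] X) :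
    (X × Y) →L[ℂ] (X × Y) :=
  (A.comp (ContinuousLinearMap.fst ℂ X Y) + C.comp (ContinuousLinearMap.snd ℂ X Y)).prod
    (B.comp (ContinuousLinearMap.snd ℂ X Y))

theorem dualOp_apply (T : E →L[ℂ] E) (φ : E →L[ℂ] ℂ) (x : E) : dualOp T φ x = φ (T x) := rfl

set_option synthInstance.maxHeartbeats 100000 in
theorem dualOp_sub_smul_one (T : E →L[ℂ] E) (z : ℂ) : dualOp (T - z • 1) = dualOp T - z • 1 := by
  ext φ x
  simp [dualOp_apply]

theorem ContinuousLinearMap.HasLeftInverse.dualOp {T : E →L[ℂ] E} (h : T.HasLeftInverse) :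
    (_root_.dualOp T).HasRightInverse := by
  obtain ⟨S, hS⟩ := h
  exact ⟨_root_.dualOp S, fun φ => by ext x; simp [dualOp_apply, hS x]⟩

theorem surjective_of_isClosed_range_of_injective_dualOp {T : E →L[ℂ] E}
    (hT : IsClosed (range T)) (h : Function.Injective (dualOp T)) : Function.Surjective T := by
  intro x
  by_contra hx
  set p := LinearMap.range (T : E →ₗ[ℂ] E)
  have : IsClosed (p : Set E) := hT
  have hx' : p.mkQ x ≠ 0 := by simpa [Submodule.Quotient.mk_eq_zero, p] using hx
  obtain ⟨g, hg⟩ := SeparatingDual.exists_ne_zero (R := ℂ) hx'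
  have hzero : dualOp T (g ∘L p.mkQL) = 0 := by
    ext y
    have hy : (Submodule.Quotient.mk (T y) : E ⧸ p) = 0 :=
      (Submodule.Quotient.mk_eq_zero p).2 ⟨y, rfl⟩
    simp [dualOp_apply, hy]
  have hg0 : g ∘L p.mkQL = 0 := h (hzero.trans (map_zero _).symm)
  exact hg (by simpa using congrArg (· x) hg0)

/-- Finch: if `R` is a right inverse of `W - z` and `(W - z) φ = 0`, then
`μ ↦ (1 - (μ - z) R)⁻¹ φ` is a local solution of `(W - μ) f(μ) = 0` with value `φ` at `z`. -/
theorem HasSVEPAt.injective_sub_smul_one {D : Type*} [NormedAddCommGroup D] [NormedSpace ℂ D]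
    [CompleteSpace D] {W : D →L[ℂ] D} {z : ℂ} (hW : HasSVEPAt W z)
    (hR : (W - z • 1).HasRightInverse) : Function.Injective (W - z • (1 : D →L[ℂ] D)) := by
  obtain ⟨R, hR⟩ := hR
  obtain ⟨r, hr, hsvep⟩ := hW
  rw [injective_iff_map_eq_zero]
  intro φ hφ
  set g : ℂ → D →L[ℂ] D := fun μ => 1 - (μ - z) • R
  set V := ball z r ∩ g ⁻¹' {u | IsUnit u}
  have hV : IsOpen V := isOpen_ball.inter (Units.isOpen.preimage (by fun_prop))
  have hzV : z ∈ V := ⟨mem_ball_self hr, by simp [g]⟩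
  have hf : AnalyticOnNhd ℂ (fun μ => Ring.inverse (g μ) φ) V := by
    have hinv : AnalyticOnNhd ℂ (fun μ => Ring.inverse (g μ)) V :=
      analyticOnNhd_inverse.comp (fun μ _ => by fun_prop) fun μ hμ => hμ.2
    exact fun μ hμ => ((apply ℂ D φ).analyticAt _).comp (hinv μ hμ)
  have hWR : (W - z • 1) * R = 1 := ContinuousLinearMap.ext hR
  have hker : ∀ μ ∈ V, (W - μ • 1) (Ring.inverse (g μ) φ) = 0 := by
    intro μ hμ
    have hfactor : W - μ • 1 = (W - z • 1) * g μ := by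
      rw [mul_sub, mul_one, mul_smul_comm, hWR, sub_smul]
      abel
    calc (W - μ • 1) (Ring.inverse (g μ) φ)
        = (W - z • 1) ((g μ * Ring.inverse (g μ)) φ) := by rw [hfactor]; rfl
      _ = 0 := by rw [Ring.mul_inverse_cancel _ hμ.2]; exact hφ
  simpa [g] using hsvep V inter_subset_left hV _ hf hker z hzV

section

variable {F : Type*} [NormedAddCommGroup F] [NormedSpace ℂ F]

theorem notMem_leftSpectrum_iff {T : E →L[ℂ] E} {z : ℂ} :
    z ∉ leftSpectrum T ↔ (T - z • 1).HasLeftInverse := by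
  simp [leftSpectrum, ContinuousLinearMap.HasLeftInverse, Function.LeftInverse,
    ContinuousLinearMap.ext_iff]

@[simp]
theorem ucMat_apply (A : E →L[ℂ] E) (B : F →L[ℂ] F) (C : F →L[ℂ] E) (v : E × F) :
    ucMat A B C v = (A v.1 + C v.2, B v.2) := rfl

theorem ucMat_sub_smul_one (A : E →L[ℂ] E) (B : F →L[ℂ] F) (C : F →L[ℂ] E) (z : ℂ) :
    ucMat A B C - z • 1 = ucMat (A - z • 1) (B - z • 1) C := by
  refine ContinuousLinearMap.ext fun v => ?_
  simp only [sub_apply, smul_apply, ucMat_apply, Prod.ext_iff, Prod.fst_sub,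
    Prod.snd_sub, Prod.smul_fst, Prod.smul_snd]
  exact ⟨by abel, rfl⟩

namespace ContinuousLinearMap.HasLeftInverse

variable {A : E →L[ℂ] E} {B : F →L[ℂ] F}

theorem ucMat (hA : A.HasLeftInverse) (hB : B.HasLeftInverse) (C : F →L[ℂ] E) :
    (ucMat A B C).HasLeftInverse := by
  obtain ⟨SA, hSA⟩ := hA
  obtain ⟨SB, hSB⟩ := hB
  refine ⟨(SA ∘L (fst ℂ E F - C ∘L SB ∘L snd ℂ E F)).prod (SB ∘L snd ℂ E F), fun v => ?_⟩
  simp [hSA v.1, hSB v.2]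

theorem of_ucMat {C : F →L[ℂ] E} (h : (_root_.ucMat A B C).HasLeftInverse) :
    A.HasLeftInverse := by
  have : _root_.ucMat A B C ∘L inl ℂ E F = inl ℂ E F ∘L A := by ext x <;> simp
  exact (this ▸ h.comp HasLeftInverse.inl).of_comp

theorem of_ucMat_of_surjective {C : F →L[ℂ] E} (h : (_root_.ucMat A B C).HasLeftInverse)
    (hA : Function.Surjective A) : B.HasLeftInverse := by
  obtain ⟨S, hS⟩ := h
  refine ⟨snd ℂ E F ∘L S ∘L inr ℂ E F, fun y => ?_⟩
  obtain ⟨x, hx⟩ := hA (-C y)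
  have hxy : _root_.ucMat A B C (x, y) = (0, B y) := by simp [hx]
  simpa [hxy] using congrArg Prod.snd (hS (x, y))

end ContinuousLinearMap.HasLeftInverse

variable (A : E →L[ℂ] E) (B : F →L[ℂ] F) (C : F →L[ℂ] E)

theorem leftSpectrum_ucMat_subset :
    leftSpectrum (ucMat A B C) ⊆ leftSpectrum A ∪ leftSpectrum B := by
  intro z hz
  by_contra h
  simp only [mem_union, not_or, notMem_leftSpectrum_iff] at h
  refine notMem_leftSpectrum_iff.2 ?_ hz
  rw [ucMat_sub_smul_one]
  exact h.1.ucMat h.2 C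

theorem leftSpectrum_subset_leftSpectrum_ucMat :
    leftSpectrum A ⊆ leftSpectrum (ucMat A B C) := by
  intro z hz
  by_contra h
  rw [notMem_leftSpectrum_iff, ucMat_sub_smul_one] at h
  exact notMem_leftSpectrum_iff.2 h.of_ucMat hz

theorem leftSpectrum_subset_leftSpectrum_ucMat_union_svepFail :
    leftSpectrum B ⊆ leftSpectrum (ucMat A B C) ∪ svepFail (dualOp A) := by
  intro z hz
  by_contra h
  simp only [mem_union, not_or, svepFail, mem_ofPred_eq, not_not, notMem_leftSpectrum_iff,
    ucMat_sub_smul_one] at h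
  obtain ⟨hM, hsvep⟩ := h
  have hA : (A - z • 1).HasLeftInverse := hM.of_ucMat
  have hA_surj : Function.Surjective (A - z • (1 : E →L[ℂ] E)) := by
    refine surjective_of_isClosed_range_of_injective_dualOp hA.isClosed_range ?_
    rw [dualOp_sub_smul_one]
    exact hsvep.injective_sub_smul_one (dualOp_sub_smul_one A z ▸ hA.dualOp)
  exact notMem_leftSpectrum_iff.2 (hM.of_ucMat_of_surjective hA_surj) hz

end

theorem stmt11 (A : X →L[ℂ] X) (B : Y →L[ℂ] Y) (C : Y →L[ℂ] X) :
    leftSpectrum (ucMat A B C) ∪ svepFail (dualOp A) =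
      leftSpectrum A ∪ leftSpectrum B ∪ svepFail (dualOp A) := by
  refine Subset.antisymm (union_subset_union_left _ (leftSpectrum_ucMat_subset A B C)) ?_
  refine union_subset (union_subset ?_ ?_) subset_union_right
  · exact (leftSpectrum_subset_leftSpectrum_ucMat A B C).trans subset_union_left
  · exact leftSpectrum_subset_leftSpectrum_ucMat_union_svepFail A B C
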